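/- arXiv:1111.1464 — 8 statements merged into one kernel-verified Lean document; each statement's English description precedes it below -/
import Mathlib

section
/- Let p, a, b, x be points in a real normed vector space such that p lies on the segment [0, a] and p also lies on the segment [x, b]. Then ‖a − x‖ + ‖b‖ ≤ ‖b − x‖ + ‖a‖. -/
/-- If `p` lies on the segment `[0, a]` and also on the segment `[x, b]` in a real
normed vector space, then `‖a − x‖ + ‖b‖ ≤ ‖b − x‖ + ‖a‖`. -/
theorem segment_intersection_norm_ineq
    {E : Type*} [NormedAddCommGroup E] [NormedSpace ℝ E]
    (p a b x : E) (hp₁ : p ∈ segment ℝ 0 a) (hp₂ : p ∈ segment ℝ x b) :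
    ‖a - x‖ + ‖b‖ ≤ ‖b - x‖ + ‖a‖ := by
  obtain ⟨u, v, hu, hv, huv, hp⟩ := hp₁
  obtain ⟨s, r, hs, hr, hsr, hq⟩ := hp₂
  have hu' : u = 1 - v := by linarith
  have hs' : s = 1 - r := by linarith
  have e1 : a - p = u • a := by rw [← hp, hu']; module
  have e2 : p - x = r • (b - x) := by rw [← hq, hs']; module
  have e3 : b - p = s • (b - x) := by rw [← hq, hs']; module
  have e4 : p = v • a := by rw [← hp]; module
  have h1 : ‖a - x‖ ≤ ‖a - p‖ + ‖p - x‖ := by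
    calc ‖a - x‖ = ‖(a - p) + (p - x)‖ := by rw [sub_add_sub_cancel]
    _ ≤ _ := norm_add_le _ _
  have h2 : ‖b‖ ≤ ‖b - p‖ + ‖p‖ := by
    calc ‖b‖ = ‖(b - p) + p‖ := by rw [sub_add_cancel]
    _ ≤ _ := norm_add_le _ _
  rw [e1, e2, e3, e4] at *
  rw [norm_smul, norm_smul, Real.norm_of_nonneg hu, Real.norm_of_nonneg hr] at h1
  rw [norm_smul, norm_smul, Real.norm_of_nonneg hs, Real.norm_of_nonneg hv] at h2
  nlinarith [norm_nonneg a, norm_nonneg (b - x)]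
end

section
/- Let a, b, x be points in a real normed vector space with ‖a‖ = 1 and ‖b‖ = 1, and suppose the segments [0, a] and [x, b] intersect in a point p. Then ‖a − x‖ ≤ ‖b − x‖. -/
/-- Lemma 3 of the paper: if `a` and `b` lie on the boundary of the unit ball and the
segments `[0, a]` and `[x, b]` intersect in a point `p`, then `‖a − x‖ ≤ ‖b − x‖`. -/
theorem norm_sub_le_of_segments_intersect
    {E : Type*} [NormedAddCommGroup E] [NormedSpace ℝ E]
    (a b x p : E) (ha : ‖a‖ = 1) (hb : ‖b‖ = 1)
    (hp₁ : p ∈ segment ℝ 0 a) (hp₂ : p ∈ segment ℝ x b) :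
    ‖a - x‖ ≤ ‖b - x‖ := by
  obtain ⟨t1, t2, ht1, ht2, hts, hpa⟩ := hp₁
  obtain ⟨s1, s2, hs1, hs2, hss, hpb⟩ := hp₂
  have hpa' : p = t2 • a := by rw [← hpa]; simp
  have hap : a - p = (1 - t2) • a := by rw [hpa']; module
  have hpx : p - x = s2 • (b - x) := by rw [← hpb]; have : s1 = 1 - s2 := by linarith
                                        rw [this]; module
  have hbp : b - p = s1 • (b - x) := by rw [← hpb]; have : s2 = 1 - s1 := by linarith
                                        rw [this]; module
  have ht2' : t2 ≤ 1 := by linarith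
  have hnap : ‖a - p‖ = 1 - t2 := by
    rw [hap, norm_smul, ha, Real.norm_eq_abs, abs_of_nonneg (by linarith)]; ring
  have hnpx : ‖p - x‖ = s2 * ‖b - x‖ := by
    rw [hpx, norm_smul, Real.norm_eq_abs, abs_of_nonneg hs2]
  have hnbp : ‖b - p‖ = s1 * ‖b - x‖ := by
    rw [hbp, norm_smul, Real.norm_eq_abs, abs_of_nonneg hs1]
  have hnp : ‖p‖ = t2 := by
    rw [hpa', norm_smul, ha, Real.norm_eq_abs, abs_of_nonneg ht2]; ring
  have key : 1 - t2 ≤ s1 * ‖b - x‖ := by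
    have := norm_sub_norm_le b p
    rw [hb, hnp, hnbp] at this; linarith
  calc ‖a - x‖ = ‖(a - p) + (p - x)‖ := by rw [sub_add_sub_cancel]
    _ ≤ ‖a - p‖ + ‖p - x‖ := norm_add_le _ _
    _ = (1 - t2) + s2 * ‖b - x‖ := by rw [hnap, hnpx]
    _ ≤ s1 * ‖b - x‖ + s2 * ‖b - x‖ := by linarith
    _ = ‖b - x‖ := by rw [← add_mul, hss, one_mul]
end

section
/- Let (E, ‖·‖) be a two-dimensional real normed vector space and let u ∈ E with ‖u‖ = 1. Then there exists v ∈ E with ‖v‖ = 1 and ‖v − u‖ = 1. -/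
/-- In a two-dimensional real normed vector space, for every unit vector `u` there is a
unit vector `v` with `‖v − u‖ = 1` (the boundary of the unit ball meets the boundary of
its translate centred at `u`). -/
theorem exists_unit_vector_dist_one
    {E : Type*} [NormedAddCommGroup E] [NormedSpace ℝ E]
    (hdim : Module.finrank ℝ E = 2) (u : E) (hu : ‖u‖ = 1) :
    ∃ v : E, ‖v‖ = 1 ∧ ‖v - u‖ = 1 := by
  have hu0 : u ≠ 0 := by
    intro h; rw [h, norm_zero] at hu; norm_num at hu
  -- find w not in the span of u
  have hne : Submodule.span ℝ {u} ≠ ⊤ := by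
    intro h
    have h1 : Module.finrank ℝ (Submodule.span ℝ {u}) = 1 :=
      finrank_span_singleton hu0
    rw [h, finrank_top, hdim] at h1
    norm_num at h1
  obtain ⟨w, hw⟩ : ∃ w, w ∉ Submodule.span ℝ {u} := by
    by_contra h
    push_neg at h
    exact hne (Submodule.eq_top_iff'.2 h)
  set c : ℝ → E := fun t => Real.cos (Real.pi * t) • u + Real.sin (Real.pi * t) • w
    with hc
  have hc0 : ∀ t, c t ≠ 0 := by
    intro t h
    by_cases hs : Real.sin (Real.pi * t) = 0
    · have hcos : Real.cos (Real.pi * t) ≠ 0 := by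
        intro hk
        have := Real.sin_sq_add_cos_sq (Real.pi * t)
        rw [hs, hk] at this; norm_num at this
      apply hu0
      have : Real.cos (Real.pi * t) • u = 0 := by
        simpa [hc, hs] using h
      exact (smul_eq_zero.1 this).resolve_left hcos
    · apply hw
      have h' : Real.sin (Real.pi * t) • w = (-(Real.cos (Real.pi * t))) • u := by
        rw [neg_smul, eq_neg_iff_add_eq_zero, add_comm]
        exact h
      have hwu : w = ((Real.sin (Real.pi * t))⁻¹ * (-(Real.cos (Real.pi * t)))) • u := by
        rw [mul_smul, ← h', inv_smul_smul₀ hs]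
      rw [hwu]
      exact Submodule.smul_mem _ _ (Submodule.mem_span_singleton_self u)
  set v : ℝ → E := fun t => ‖c t‖⁻¹ • c t with hv
  have hvnorm : ∀ t, ‖v t‖ = 1 := by
    intro t
    rw [hv]
    simp only [norm_smul, norm_inv, norm_norm]
    rw [inv_mul_cancel₀ (norm_ne_zero_iff.2 (hc0 t))]
  have hcontc : Continuous c := by
    apply Continuous.add
    · exact (Real.continuous_cos.comp (continuous_const.mul continuous_id)).smul continuous_const
    · exact (Real.continuous_sin.comp (continuous_const.mul continuous_id)).smul continuous_const
  have hcontv : Continuous v := by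
    apply Continuous.smul
    · exact (hcontc.norm.inv₀ (fun t => norm_ne_zero_iff.2 (hc0 t)))
    · exact hcontc
  have hcontf : Continuous fun t => ‖v t - u‖ := (hcontv.sub continuous_const).norm
  have hv0 : v 0 = u := by
    have : c 0 = u := by simp [hc]
    rw [hv]; simp only [this, hu]; norm_num
  have hv1 : v 1 = -u := by
    have : c 1 = -u := by simp [hc]
    rw [hv]; simp only [this, norm_neg, hu]; norm_num
  have hf0 : ‖v 0 - u‖ = 0 := by rw [hv0]; simp
  have hf1 : ‖v 1 - u‖ = 2 := by
    rw [hv1]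
    have : -u - u = -(2 : ℝ) • u := by module
    rw [this, norm_smul, hu]; norm_num
  have h1mem : (1 : ℝ) ∈ Set.Icc ‖v 0 - u‖ ‖v 1 - u‖ := by
    rw [hf0, hf1]; norm_num
  obtain ⟨t, _, ht⟩ := intermediate_value_Icc (zero_le_one) hcontf.continuousOn h1mem
  exact ⟨v t, hvnorm t, ht⟩
end

section
/- Let (E, ‖·‖) be a two-dimensional real normed vector space. Then there exist six points y₀, y₁, …, y₅ ∈ E (indexed cyclically modulo 6) such that: (i) ‖y_i‖ = 1 for every i; (ii) ‖y_{i+1} − y_i‖ = 1 for every i; (iii) y_{i+3} = −y_i for every i; and (iv) every vector v ∈ E lies in cone(y_i, y_{i+1}) for some i, where cone(a, b) = {α·a + β·b : α, β ≥ 0}. -/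
/-!
Pick a unit vector `x`. The unit sphere of a plane is connected and `‖· - x‖` runs on it from
`0` (at `x`) to `2` (at `-x`), so some unit vector `y` has `‖y - x‖ = 1`. Then `x, y, y - x, -x,
-y, x - y` are unit vectors with consecutive differences again among them. Since `y ≠ ±x`, the
pair `x, y` is a basis, and the six cones are cut out by the signs of `a`, `b` and `a + b` in
`a • x + b • y`.
-/

def cone {E : Type*} [AddCommGroup E] [Module ℝ E] (a b : E) : Set E :=
  {w | ∃ α β : ℝ, 0 ≤ α ∧ 0 ≤ β ∧ w = α • a + β • b}

open Metric

theorem exists_norm_eq_one_and_norm_sub_eq {E : Type*} [NormedAddCommGroup E] [NormedSpace ℝ E]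
    (hE : 1 < Module.rank ℝ E) {x : E} (hx : ‖x‖ = 1) {r : ℝ} (hr : r ∈ Set.Icc 0 2) :
    ∃ y : E, ‖y‖ = 1 ∧ ‖y - x‖ = r := by
  have hx_mem : x ∈ sphere (0 : E) 1 := by simpa using hx
  have hnx_mem : -x ∈ sphere (0 : E) 1 := by simpa using hx
  have hr' : r ∈ Set.Icc ‖x - x‖ ‖-x - x‖ := by
    rwa [sub_self, norm_zero, ← neg_add', norm_neg, ← two_smul ℝ, norm_smul, hx, Real.norm_two,
      mul_one]
  obtain ⟨y, hy, rfl⟩ := (isPreconnected_sphere hE 0 1).intermediate_value hx_mem hnx_mem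
    (continuous_id.sub continuous_const).norm.continuousOn hr'
  exact ⟨y, by simpa using hy, rfl⟩

theorem linearIndependent_pair_of_norm_eq_one {E : Type*} [NormedAddCommGroup E]
    [NormedSpace ℝ E] {x y : E} (hx : ‖x‖ = 1) (hy : ‖y‖ = 1) (hyx : ‖y - x‖ = 1) :
    LinearIndependent ℝ ![x, y] := by
  refine (LinearIndependent.pair_iff' (norm_ne_zero_iff.1 (by rw [hx]; exact one_ne_zero))).2 ?_
  rintro a rfl
  have ha : |a| = 1 := by simpa [norm_smul, hx] using hy
  rcases abs_eq_abs.1 (ha.trans abs_one.symm) with rfl | rfl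
  · simp at hyx
  · rw [show (-1 : ℝ) • x - x = (-2 : ℝ) • x by module, norm_smul, hx] at hyx
    norm_num at hyx

theorem exists_eq_smul_add_smul_of_linearIndependent {E : Type*} [AddCommGroup E] [Module ℝ E]
    (hE : Module.finrank ℝ E = 2) {x y : E} (hxy : LinearIndependent ℝ ![x, y]) (v : E) :
    ∃ a b : ℝ, v = a • x + b • y := by
  have hspan := hxy.span_eq_top_of_card_eq_finrank (by simp [hE])
  obtain ⟨c, hc⟩ :=
    (Submodule.mem_span_range_iff_exists_fun ℝ).1 (hspan ▸ Submodule.mem_top (x := v))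
  exact ⟨c 0, c 1, by simpa [Fin.sum_univ_two] using hc.symm⟩

def hexagon {E : Type*} [AddCommGroup E] (x y : E) : ZMod 6 → E :=
  ![x, y, y - x, -x, -y, x - y]

section Hexagon

variable {E : Type*}

section AddCommGroup

variable [AddCommGroup E] (x y : E)

theorem hexagon_add_three (i : ZMod 6) : hexagon x y (i + 3) = -hexagon x y i := by
  fin_cases i <;> simp [hexagon] <;> rfl

theorem hexagon_add_one_sub (i : ZMod 6) :
    hexagon x y (i + 1) - hexagon x y i = hexagon x y (i + 2) := by
  fin_cases i
  exacts [rfl, show y - x - y = -x by abel, show -x - (y - x) = -y by abel,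
    show -y - -x = x - y by abel, show x - y - -y = x by abel, show x - (x - y) = y by abel]

theorem exists_mem_cone_hexagon [Module ℝ E] (a b : ℝ) :
    ∃ i, a • x + b • y ∈ cone (hexagon x y i) (hexagon x y (i + 1)) := by
  rcases le_total 0 a with ha | ha <;> rcases le_total 0 b with hb | hb <;>
    rcases le_total 0 (a + b) with hab | hab
  · exact ⟨0, a, b, ha, hb, rfl⟩
  · exact ⟨0, a, b, ha, hb, rfl⟩
  · exact ⟨5, -b, a + b, by linarith, hab, show _ = _ • (x - y) + _ • x by module⟩
  · exact ⟨4, -(a + b), a, by linarith, ha, show _ = _ • -y + _ • (x - y) by module⟩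
  · exact ⟨1, a + b, -a, hab, by linarith, show _ = _ • y + _ • (y - x) by module⟩
  · exact ⟨2, b, -(a + b), hb, by linarith, show _ = _ • (y - x) + _ • -x by module⟩
  · exact ⟨3, -a, -b, by linarith, by linarith, show _ = _ • -x + _ • -y by module⟩
  · exact ⟨3, -a, -b, by linarith, by linarith, show _ = _ • -x + _ • -y by module⟩

end AddCommGroup

theorem norm_hexagon [SeminormedAddCommGroup E] {x y : E} (hx : ‖x‖ = 1) (hy : ‖y‖ = 1)
    (hyx : ‖y - x‖ = 1) (i : ZMod 6) : ‖hexagon x y i‖ = 1 := by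
  fin_cases i <;> simp [hexagon, hx, hy, hyx, norm_sub_rev x y]

end Hexagon

/-- Lemma 2 of the paper (hexagon construction): in a two-dimensional real normed vector
space there are six unit vectors `y₀, …, y₅` (indexed cyclically modulo 6) with consecutive
ones at distance 1, symmetric about the origin, whose six cones cover the plane. -/
theorem exists_hexagon
    {E : Type*} [NormedAddCommGroup E] [NormedSpace ℝ E]
    (hdim : Module.finrank ℝ E = 2) :
    ∃ y : ZMod 6 → E,
      (∀ i, ‖y i‖ = 1) ∧
      (∀ i, ‖y (i + 1) - y i‖ = 1) ∧
      (∀ i, y (i + 3) = -y i) ∧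
      (∀ v : E, ∃ i, v ∈ cone (y i) (y (i + 1))) := by
  have hrank : 1 < Module.rank ℝ E := Module.lt_rank_of_lt_finrank (by omega)
  have : Nontrivial E := Module.nontrivial_of_finrank_pos (R := ℝ) (by omega)
  obtain ⟨x, hx⟩ := exists_norm_eq E zero_le_one
  obtain ⟨y, hy, hyx⟩ := exists_norm_eq_one_and_norm_sub_eq hrank hx ⟨zero_le_one, one_le_two⟩
  refine ⟨hexagon x y, norm_hexagon hx hy hyx, fun i => ?_, hexagon_add_three x y, fun v => ?_⟩
  · rw [hexagon_add_one_sub, norm_hexagon hx hy hyx]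
  · obtain ⟨a, b, rfl⟩ := exists_eq_smul_add_smul_of_linearIndependent hdim
      (linearIndependent_pair_of_norm_eq_one hx hy hyx) v
    exact exists_mem_cone_hexagon x y a b
end

section
/- Let a, b be points in a real normed vector space with ‖a‖ = ‖b‖ = 1, and let x₁ ∈ cone(a, b) with ‖x₁‖ = 1, where cone(a, b) = {α·a + β·b : α, β ≥ 0}. Then ‖a − x₁‖ ≤ ‖a − b‖. -/
/-- Inequality (1) in the proof of Lemma 4 of the paper: if `a`, `b` are unit vectors and
`x₁` is a unit vector in the cone spanned by `a` and `b`, then `‖a − x₁‖ ≤ ‖a − b‖`. -/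
theorem norm_sub_le_of_unit_mem_cone
    {E : Type*} [NormedAddCommGroup E] [NormedSpace ℝ E]
    (a b x₁ : E) (ha : ‖a‖ = 1) (hb : ‖b‖ = 1)
    (hx₁ : x₁ ∈ cone a b) (hnorm : ‖x₁‖ = 1) :
    ‖a - x₁‖ ≤ ‖a - b‖ := by
  obtain ⟨α, β, hα, hβ, rfl⟩ := hx₁
  set x : E := α • a + β • b with hx
  have ht1 : 1 ≤ α + β := by
    calc (1:ℝ) = ‖x‖ := hnorm.symm
    _ ≤ ‖α • a‖ + ‖β • b‖ := norm_add_le _ _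
    _ = α + β := by
        rw [norm_smul, norm_smul, ha, hb, Real.norm_eq_abs, Real.norm_eq_abs,
          abs_of_nonneg hα, abs_of_nonneg hβ]; ring
  have h1 : α + β - 1 ≤ α * ‖a - b‖ := by
    have hdecomp : (α + β) • b = x - α • (a - b) := by rw [hx]; module
    have h : ‖(α + β) • b‖ ≤ ‖x‖ + ‖α • (a - b)‖ := by
      rw [hdecomp]; exact norm_sub_le _ _
    rw [norm_smul, norm_smul, hb, hnorm, Real.norm_eq_abs, Real.norm_eq_abs,
      abs_of_nonneg hα, abs_of_nonneg (by linarith : (0:ℝ) ≤ α + β)] at h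
    linarith
  have h2 : (α + β) * ‖a - x‖ ≤ β * ‖a - b‖ + (α + β - 1) := by
    have hdecomp : (α + β) • (a - x) = β • (a - b) + (1 - (α + β)) • x := by
      rw [hx]; module
    have h : ‖(α + β) • (a - x)‖ ≤ ‖β • (a - b)‖ + ‖(1 - (α + β)) • x‖ := by
      rw [hdecomp]; exact norm_add_le _ _
    rw [norm_smul, norm_smul, norm_smul, hnorm, Real.norm_eq_abs, Real.norm_eq_abs,
      Real.norm_eq_abs, abs_of_nonneg hβ,
      abs_of_nonneg (by linarith : (0:ℝ) ≤ α + β),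
      abs_of_nonpos (by linarith : (1 - (α + β)) ≤ 0)] at h
    linarith
  have h3 : (α + β) * ‖a - x‖ ≤ (α + β) * ‖a - b‖ := by nlinarith
  have ht0 : 0 < α + β := by linarith
  exact le_of_mul_le_mul_left h3 ht0
end

section
/- Let a, b be points in a two-dimensional real normed vector space with ‖a‖ = ‖b‖ = 1 and ‖a − b‖ = 1, and let x₀, x₁ ∈ cone(a, b) with ‖x₀‖ ≤ ‖x₁‖, where cone(a, b) = {α·a + β·b : α, β ≥ 0}. Then ‖x₀ − x₁‖ ≤ ‖x₁‖. -/
section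

variable {E : Type*} [NormedAddCommGroup E] [NormedSpace ℝ E] {a b : E}

theorem mul_norm_le_norm_smul_add_smul (hab : ‖a - b‖ ≤ ‖a‖) (α : ℝ) {β : ℝ} (hβ : 0 ≤ β) :
    α * ‖a‖ ≤ ‖α • a + β • b‖ := by
  obtain ⟨g, hg, hga⟩ := exists_dual_vector'' ℝ a
  have hg_le (x : E) : g x ≤ ‖x‖ :=
    (le_abs_self _).trans ((g.le_opNorm x).trans (mul_le_of_le_one_left (norm_nonneg x) hg))
  simp only [RCLike.ofReal_real_eq_id, id] at hga
  have hgb : 0 ≤ g b := by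
    have := hg_le (a - b)
    rw [map_sub, hga] at this
    linarith
  calc α * ‖a‖ ≤ g (α • a + β • b) := by
        rw [map_add, map_smul, map_smul, hga, smul_eq_mul, smul_eq_mul]
        nlinarith
    _ ≤ ‖α • a + β • b‖ := hg_le _

theorem norm_smul_add_smul_le_norm_smul_add_smul_right (hab : ‖a - b‖ ≤ ‖a‖) {α β β' : ℝ}
    (hα : 0 ≤ α) (hβ : 0 ≤ β) (hββ' : β ≤ β') :
    ‖α • a + β • b‖ ≤ ‖α • a + β' • b‖ := by
  obtain rfl | hβ' := (hβ.trans hββ').eq_or_lt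
  · rw [le_antisymm hββ' hβ]
  set t := β / β'
  have ht₀ : 0 ≤ t := div_nonneg hβ hβ'.le
  have ht₁ : t ≤ 1 := (div_le_one hβ').mpr hββ'
  have hsplit : α • a + β • b = t • (α • a + β' • b) + (1 - t) • (α • a) := by
    have : t * β' = β := div_mul_cancel₀ β hβ'.ne'
    rw [smul_add, smul_smul, smul_smul, this]
    module
  -- convexity of `γ ↦ ‖α • a + γ • b‖` on `[0, β']`, whose value at `0` is its minimum
  have hmin := mul_norm_le_norm_smul_add_smul hab α hβ'.le
  calc ‖α • a + β • b‖ ≤ t * ‖α • a + β' • b‖ + (1 - t) * (α * ‖a‖) := by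
        rw [hsplit, ← norm_smul_of_nonneg hα, ← norm_smul_of_nonneg ht₀,
          ← norm_smul_of_nonneg (sub_nonneg.mpr ht₁)]
        exact norm_add_le _ _
    _ ≤ ‖α • a + β' • b‖ := by nlinarith

theorem norm_smul_add_smul_le_norm_smul_add_smul (hab : ‖a - b‖ ≤ ‖a‖) (hba : ‖b - a‖ ≤ ‖b‖)
    {α β α' β' : ℝ} (hα : 0 ≤ α) (hβ : 0 ≤ β) (hαα' : α ≤ α') (hββ' : β ≤ β') :
    ‖α • a + β • b‖ ≤ ‖α' • a + β' • b‖ :=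
  calc ‖α • a + β • b‖ ≤ ‖α • a + β' • b‖ :=
        norm_smul_add_smul_le_norm_smul_add_smul_right hab hα hβ hββ'
    _ = ‖β' • b + α • a‖ := by rw [add_comm]
    _ ≤ ‖β' • b + α' • a‖ :=
        norm_smul_add_smul_le_norm_smul_add_smul_right hba (hβ.trans hββ') hα hαα'
    _ = ‖α' • a + β' • b‖ := by rw [add_comm]

theorem norm_smul_sub_smul_le_max (ha : ‖a‖ ≤ 1) (hb : ‖b‖ ≤ 1) (hab : ‖a - b‖ ≤ 1)
    {s t : ℝ} (hs : 0 ≤ s) (ht : 0 ≤ t) : ‖s • a - t • b‖ ≤ max s t := by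
  wlog hst : s ≤ t generalizing a b s t
  · rw [norm_sub_rev, max_comm]
    exact this hb ha (by rwa [norm_sub_rev]) ht hs (le_of_not_ge hst)
  calc ‖s • a - t • b‖ = ‖s • (a - b) - (t - s) • b‖ := by congr 1; module
    _ ≤ ‖s • (a - b)‖ + ‖(t - s) • b‖ := norm_sub_le _ _
    _ ≤ s + (t - s) := by
        rw [norm_smul_of_nonneg hs, norm_smul_of_nonneg (sub_nonneg.mpr hst)]
        exact add_le_add (mul_le_of_le_one_right hs hab)
          (mul_le_of_le_one_right (sub_nonneg.mpr hst) hb)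
    _ ≤ max s t := by simp

theorem norm_sub_le_max_of_mem_cone (ha : ‖a‖ = 1) (hb : ‖b‖ = 1) (hab : ‖a - b‖ ≤ 1)
    {x y : E} (hx : x ∈ cone a b) (hy : y ∈ cone a b) : ‖x - y‖ ≤ max ‖x‖ ‖y‖ := by
  obtain ⟨α, β, hα, hβ, rfl⟩ := hx
  obtain ⟨α', β', hα', hβ', rfl⟩ := hy
  wlog hαα' : α' ≤ α generalizing α β α' β'
  · rw [norm_sub_rev, max_comm]
    exact this α' β' hα' hβ' α β hα hβ (le_of_not_ge hαα')
  have hba : ‖b - a‖ ≤ 1 := by rwa [norm_sub_rev]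
  have hab' : ‖a - b‖ ≤ ‖a‖ := ha ▸ hab
  have hba' : ‖b - a‖ ≤ ‖b‖ := hb ▸ hba
  rcases le_total β' β with hββ' | hββ'
  · calc ‖α • a + β • b - (α' • a + β' • b)‖ = ‖(α - α') • a + (β - β') • b‖ := by
          congr 1; module
      _ ≤ ‖α • a + β • b‖ := norm_smul_add_smul_le_norm_smul_add_smul hab' hba'
          (sub_nonneg.mpr hαα') (sub_nonneg.mpr hββ') (by linarith) (by linarith)
      _ ≤ _ := le_max_left _ _
  · have hα_le : α ≤ ‖α • a + β • b‖ := by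
      simpa [ha] using mul_norm_le_norm_smul_add_smul hab' α hβ
    have hβ'_le : β' ≤ ‖α' • a + β' • b‖ := by
      simpa [hb, add_comm] using mul_norm_le_norm_smul_add_smul hba' β' hα'
    calc ‖α • a + β • b - (α' • a + β' • b)‖ = ‖(α - α') • a - (β' - β) • b‖ := by
          congr 1; module
      _ ≤ max (α - α') (β' - β) := norm_smul_sub_smul_le_max ha.le hb.le hab
          (sub_nonneg.mpr hαα') (sub_nonneg.mpr hββ')
      _ ≤ _ := max_le_max (by linarith) (by linarith)

end

theorem norm_sub_le_in_cone_general
    {E : Type*} [NormedAddCommGroup E] [NormedSpace ℝ E]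
    (a b : E) (ha : ‖a‖ = 1) (hb : ‖b‖ = 1) (hab : ‖a - b‖ = 1)
    (x₀ x₁ : E) (hx₀ : x₀ ∈ cone a b) (hx₁ : x₁ ∈ cone a b)
    (hle : ‖x₀‖ ≤ ‖x₁‖) :
    ‖x₀ - x₁‖ ≤ ‖x₁‖ :=
  (norm_sub_le_max_of_mem_cone ha hb hab.le hx₀ hx₁).trans (max_le hle le_rfl)

/-- The Claim in the proof of Lemma 4 of the paper: if `a`, `b` are unit vectors at
distance 1 in a two-dimensional real normed vector space, and `x₀, x₁` lie in the cone
spanned by `a` and `b` with `‖x₀‖ ≤ ‖x₁‖`, then `‖x₀ − x₁‖ ≤ ‖x₁‖`. -/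
theorem norm_sub_le_in_cone
    {E : Type*} [NormedAddCommGroup E] [NormedSpace ℝ E]
    (hdim : Module.finrank ℝ E = 2)
    (a b : E) (ha : ‖a‖ = 1) (hb : ‖b‖ = 1) (hab : ‖a - b‖ = 1)
    (x₀ x₁ : E) (hx₀ : x₀ ∈ cone a b) (hx₁ : x₁ ∈ cone a b)
    (hle : ‖x₀‖ ≤ ‖x₁‖) :
    ‖x₀ - x₁‖ ≤ ‖x₁‖ :=
  norm_sub_le_in_cone_general a b ha hb hab x₀ x₁ hx₀ hx₁ hle
end

section
/- Let T be a finite tree with at least two vertices and fix a linear order ⪯ on its edge set. For vertices x, y of T let ℓ_T(x, y) denote the ⪯-greatest edge on the unique path in T from x to y. Then for every nonempty subset A of the vertex set of T, the set {ℓ_T(x, y) : x, y ∈ A, x ≠ y} has exactly |A| − 1 elements. -/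
/-!
Let `e` be the greatest of the edges `ℓ x y` with `x ≠ y` in `A`. Deleting `e` from the tree leaves
two components, which split `A` into nonempty parts `A₁` and `A₂`. Every path between the parts
crosses `e`, so `ℓ x y = e` for such pairs. The path between two points of one part stays in its
component, so the values of `ℓ` on `A₁` and on `A₂` are disjoint and both miss `e`. Hence `A`
has one value more than `A₁` and `A₂` together, and induction on `|A|` gives `|A| - 1`.
-/

open scoped Classical

open Finset

namespace Finset

theorem offDiag_eq_filter {α : Type*} [DecidableEq α] (s : Finset α) :
    s.offDiag = (s ×ˢ s).filter fun a => a.1 ≠ a.2 := by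
  ext
  simp [and_assoc]

theorem apply_mem_image_uncurry_offDiag {α β : Type*} [DecidableEq β] {f : α → α → β}
    {s : Finset α} {x y : α} (hx : x ∈ s) (hy : y ∈ s) (hxy : x ≠ y) :
    f x y ∈ s.offDiag.image f.uncurry :=
  mem_image_of_mem f.uncurry (a := (x, y)) (mem_offDiag.2 ⟨hx, hy, hxy⟩)

theorem image_uncurry_offDiag_union {α β : Type*} [DecidableEq α] [DecidableEq β]
    {f : α → α → β} {b : β} {s t : Finset α} (hst : Disjoint s t) (hs : s.Nonempty)
    (ht : t.Nonempty) (hcross : ∀ x ∈ s, ∀ y ∈ t, f x y = b ∧ f y x = b) :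
    (s ∪ t).offDiag.image f.uncurry =
      s.offDiag.image f.uncurry ∪ t.offDiag.image f.uncurry ∪ {b} := by
  have hst' : (s ×ˢ t).image f.uncurry = {b} := by
    rw [← image_const (hs.product ht) b]
    exact image_congr fun q hq => (hcross q.1 (mem_product.1 hq).1 q.2 (mem_product.1 hq).2).1
  have hts' : (t ×ˢ s).image f.uncurry = {b} := by
    rw [← image_const (ht.product hs) b]
    exact image_congr fun q hq => (hcross q.2 (mem_product.1 hq).2 q.1 (mem_product.1 hq).1).2
  rw [offDiag_union hst, image_union, image_union, image_union, hst', hts', union_assoc _ {b},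
    union_self]

theorem card_image_uncurry_offDiag_union {α β : Type*} [DecidableEq α] [DecidableEq β]
    {f : α → α → β} {b : β} {s t : Finset α} (hst : Disjoint s t) (hs : s.Nonempty)
    (ht : t.Nonempty) (hcross : ∀ x ∈ s, ∀ y ∈ t, f x y = b ∧ f y x = b)
    (hbs : b ∉ s.offDiag.image f.uncurry) (hbt : b ∉ t.offDiag.image f.uncurry)
    (hdisj : Disjoint (s.offDiag.image f.uncurry) (t.offDiag.image f.uncurry)) :
    #((s ∪ t).offDiag.image f.uncurry) =
      #(s.offDiag.image f.uncurry) + #(t.offDiag.image f.uncurry) + 1 := by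
  rw [image_uncurry_offDiag_union hst hs ht hcross,
    card_union_of_disjoint (disjoint_singleton_right.2 (notMem_union.2 ⟨hbs, hbt⟩)),
    card_union_of_disjoint hdisj, card_singleton]

end Finset

namespace SimpleGraph

variable {V : Type*} {G H : SimpleGraph V}

theorem Walk.connectedComponentMk_deleteEdges_eq_or {u v x y : V} (p : G.Walk x y) :
    (G.deleteEdges {s(u, v)}).connectedComponentMk x =
        (G.deleteEdges {s(u, v)}).connectedComponentMk y ∨
      (G.deleteEdges {s(u, v)}).connectedComponentMk x =
        (G.deleteEdges {s(u, v)}).connectedComponentMk u ∨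
      (G.deleteEdges {s(u, v)}).connectedComponentMk x =
        (G.deleteEdges {s(u, v)}).connectedComponentMk v := by
  induction p with
  | nil => exact .inl rfl
  | @cons x a y hxa q ih =>
    by_cases he : s(x, a) = s(u, v)
    · rcases Sym2.eq_iff.mp he with ⟨rfl, -⟩ | ⟨rfl, -⟩ <;> simp
    · have hxa' : (G.deleteEdges {s(u, v)}).Adj x a := by simp [hxa, he]
      rwa [ConnectedComponent.sound hxa'.reachable]

theorem Preconnected.connectedComponentMk_deleteEdges_eq_or (hG : G.Preconnected) (u v x : V) :
    (G.deleteEdges {s(u, v)}).connectedComponentMk x =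
        (G.deleteEdges {s(u, v)}).connectedComponentMk u ∨
      (G.deleteEdges {s(u, v)}).connectedComponentMk x =
        (G.deleteEdges {s(u, v)}).connectedComponentMk v := by
  obtain ⟨p⟩ := hG x u
  rcases p.connectedComponentMk_deleteEdges_eq_or (u := u) (v := v) with h | h | h <;> simp [h]

/-- The order is an explicit argument because `{e // e ∈ G.edgeSet}` already carries the `≤` of
`Sym2 V`. -/
def IsGreatestPathEdge (lo : LinearOrder {e // e ∈ G.edgeSet})
    (ℓ : V → V → {e // e ∈ G.edgeSet}) : Prop :=
  ∀ x y : V, x ≠ y → ∀ p : G.Walk x y, p.IsPath →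
    ↑(ℓ x y) ∈ p.edges ∧ ∀ e : {e // e ∈ G.edgeSet}, ↑e ∈ p.edges → lo.le e (ℓ x y)

namespace IsGreatestPathEdge

variable {lo : LinearOrder {e // e ∈ G.edgeSet}} {ℓ : V → V → {e // e ∈ G.edgeSet}}

theorem eq_of_not_reachable_deleteEdges (hℓ : IsGreatestPathEdge lo ℓ) (hG : G.Preconnected)
    {A : Finset V} {e : {e // e ∈ G.edgeSet}} (hmax : ∀ f ∈ A.offDiag.image ℓ.uncurry, lo.le f e)
    {x y : V} (hx : x ∈ A) (hy : y ∈ A) (h : ¬ (G.deleteEdges {↑e}).Reachable x y) :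
    ℓ x y = e := by
  have hxy : x ≠ y := fun hxy => h (hxy ▸ Reachable.refl x)
  obtain ⟨p, hp⟩ := (hG x y).exists_isPath
  have hep : ↑e ∈ p.edges :=
    by_contra fun he => h ⟨p.toDeleteEdges {↑e} fun f hf hfe => he (hfe ▸ hf)⟩
  exact lo.le_antisymm _ _ (hmax _ (apply_mem_image_uncurry_offDiag hx hy hxy))
    ((hℓ x y hxy p hp).2 e hep)

theorem reachable_of_mem (hℓ : IsGreatestPathEdge lo ℓ) (hH : H ≤ G) {x y a : V} (hxy : x ≠ y)
    (h : H.Reachable x y) (ha : a ∈ (ℓ x y : Sym2 V)) : H.Reachable x a := by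
  obtain ⟨p, hp⟩ := h.exists_isPath
  have hmem := (hℓ x y hxy (p.mapLe hH) (hp.mapLe hH)).1
  rw [Walk.edges_mapLe_eq_edges] at hmem
  exact ⟨p.takeUntil a (Walk.mem_support_of_mem_edges hmem ha)⟩

theorem connectedComponentMk_eq_of_mem_image (hℓ : IsGreatestPathEdge lo ℓ) (hH : H ≤ G)
    {C : H.ConnectedComponent} {A : Finset V} {f : {e // e ∈ G.edgeSet}}
    (hf : f ∈ (A.filter (H.connectedComponentMk · = C)).offDiag.image ℓ.uncurry)
    {a : V} (ha : a ∈ (f : Sym2 V)) : H.connectedComponentMk a = C := by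
  obtain ⟨⟨x, y⟩, hxy, rfl⟩ := mem_image.1 hf
  simp only [mem_offDiag, mem_filter] at hxy
  obtain ⟨⟨-, hx⟩, ⟨-, hy⟩, hne⟩ := hxy
  rw [← hx, ConnectedComponent.eq]
  exact (hℓ.reachable_of_mem hH hne (ConnectedComponent.exact (hx.trans hy.symm)) ha).symm

theorem notMem_image_of_connectedComponentMk_ne (hℓ : IsGreatestPathEdge lo ℓ) (hH : H ≤ G)
    {C : H.ConnectedComponent} (A : Finset V) {f : {e // e ∈ G.edgeSet}} {a : V}
    (ha : a ∈ (f : Sym2 V)) (haC : H.connectedComponentMk a ≠ C) :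
    f ∉ (A.filter (H.connectedComponentMk · = C)).offDiag.image ℓ.uncurry := fun hf =>
  haC (hℓ.connectedComponentMk_eq_of_mem_image hH hf ha)

theorem disjoint_image_of_ne (hℓ : IsGreatestPathEdge lo ℓ) (hH : H ≤ G)
    {C C' : H.ConnectedComponent} (hCC' : C ≠ C') (A : Finset V) :
    Disjoint ((A.filter (H.connectedComponentMk · = C)).offDiag.image ℓ.uncurry)
      ((A.filter (H.connectedComponentMk · = C')).offDiag.image ℓ.uncurry) :=
  Finset.disjoint_left.2 fun _ hf hf' =>
    hCC' ((hℓ.connectedComponentMk_eq_of_mem_image hH hf (Sym2.out_fst_mem _)).symm.trans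
      (hℓ.connectedComponentMk_eq_of_mem_image hH hf' (Sym2.out_fst_mem _)))

theorem exists_split (hℓ : IsGreatestPathEdge lo ℓ) (hG : G.IsTree) {A : Finset V}
    (hA : 1 < #A) :
    ∃ A₁ A₂ : Finset V, Disjoint A₁ A₂ ∧ A₁ ∪ A₂ = A ∧ A₁.Nonempty ∧ A₂.Nonempty ∧
      #(A.offDiag.image ℓ.uncurry) =
        #(A₁.offDiag.image ℓ.uncurry) + #(A₂.offDiag.image ℓ.uncurry) + 1 := by
  obtain ⟨x₀, hx₀, y₀, hy₀, hne₀⟩ := one_lt_card.1 hA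
  have hS : (A.offDiag.image ℓ.uncurry).Nonempty :=
    ⟨_, apply_mem_image_uncurry_offDiag hx₀ hy₀ hne₀⟩
  obtain ⟨⟨⟨u, v⟩, huv⟩, he, hmax⟩ :
      ∃ e ∈ A.offDiag.image ℓ.uncurry, ∀ f ∈ A.offDiag.image ℓ.uncurry, lo.le f e :=
    ⟨_, @max'_mem _ lo _ hS, fun f hf => @le_max' _ lo _ f hf⟩
  have hH : G.deleteEdges {s(u, v)} ≤ G := deleteEdges_le _
  set c := (G.deleteEdges {s(u, v)}).connectedComponentMk
  have hcuv : c u ≠ c v := fun h =>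
    isAcyclic_iff_forall_adj_isBridge.1 hG.isAcyclic huv (ConnectedComponent.exact h)
  set A₁ := A.filter (c · = c u)
  set A₂ := A.filter (c · = c v)
  have hdisj : Disjoint A₁ A₂ := disjoint_filter.2 fun _ _ h₁ h₂ => hcuv (h₁.symm.trans h₂)
  have hunion : A₁ ∪ A₂ = A := by
    rw [← filter_or, filter_true_of_mem fun x _ =>
      hG.connected.preconnected.connectedComponentMk_deleteEdges_eq_or u v x]
  have hcross : ∀ x ∈ A₁, ∀ y ∈ A₂, ℓ x y = ⟨s(u, v), huv⟩ ∧ ℓ y x = ⟨s(u, v), huv⟩ := by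
    intro x hx y hy
    have hxy : ¬ (G.deleteEdges {s(u, v)}).Reachable x y := fun h =>
      hcuv (((mem_filter.1 hx).2.symm.trans (ConnectedComponent.sound h)).trans (mem_filter.1 hy).2)
    exact ⟨hℓ.eq_of_not_reachable_deleteEdges hG.connected.preconnected hmax
        (mem_filter.1 hx).1 (mem_filter.1 hy).1 hxy,
      hℓ.eq_of_not_reachable_deleteEdges hG.connected.preconnected hmax
        (mem_filter.1 hy).1 (mem_filter.1 hx).1 fun h => hxy h.symm⟩
  have he₁ : ⟨s(u, v), huv⟩ ∉ A₁.offDiag.image ℓ.uncurry :=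
    hℓ.notMem_image_of_connectedComponentMk_ne hH A (Sym2.mem_mk_right u v) hcuv.symm
  have he₂ : ⟨s(u, v), huv⟩ ∉ A₂.offDiag.image ℓ.uncurry :=
    hℓ.notMem_image_of_connectedComponentMk_ne hH A (Sym2.mem_mk_left u v) hcuv
  have hA₁ : A₁.Nonempty :=
    nonempty_iff_ne_empty.2 fun h => he₂ (by rwa [← hunion, h, empty_union] at he)
  have hA₂ : A₂.Nonempty :=
    nonempty_iff_ne_empty.2 fun h => he₁ (by rwa [← hunion, h, union_empty] at he)
  refine ⟨A₁, A₂, hdisj, hunion, hA₁, hA₂, ?_⟩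
  rw [← hunion]
  exact card_image_uncurry_offDiag_union hdisj hA₁ hA₂ hcross he₁ he₂
    (hℓ.disjoint_image_of_ne hH hcuv A)

end IsGreatestPathEdge

end SimpleGraph

open SimpleGraph

theorem card_max_path_edges_general
    {V : Type*} (G : SimpleGraph V) (hG : G.IsTree)
    (lo : LinearOrder {e // e ∈ G.edgeSet})
    (ℓ : V → V → {e // e ∈ G.edgeSet})
    (hℓ : ∀ x y : V, x ≠ y → ∀ p : G.Walk x y, p.IsPath →
      (↑(ℓ x y) ∈ p.edges ∧
        ∀ e : {e // e ∈ G.edgeSet}, ↑e ∈ p.edges → lo.le e (ℓ x y))) :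
    ∀ A : Finset V, A.Nonempty →
      (((A ×ˢ A).filter fun q => q.1 ≠ q.2).image fun q => ℓ q.1 q.2).card
        = A.card - 1 := by
  replace hℓ : IsGreatestPathEdge lo ℓ := hℓ
  intro A hA
  rw [← offDiag_eq_filter]
  change #(A.offDiag.image ℓ.uncurry) = #A - 1
  induction hn : #A using Nat.strong_induction_on generalizing A with
  | _ n ih =>
    obtain h | h := le_or_gt #A 1
    · obtain ⟨a, rfl⟩ := card_eq_one.1 (le_antisymm h hA.card_pos)
      simp [← hn]
    · obtain ⟨A₁, A₂, hdisj, rfl, hA₁, hA₂, hcard⟩ := hℓ.exists_split hG h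
      have hn' : #A₁ + #A₂ = n := hn ▸ (card_union_of_disjoint hdisj).symm
      have h₁ := hA₁.card_pos
      have h₂ := hA₂.card_pos
      rw [hcard, ih _ (by omega) A₁ hA₁ rfl, ih _ (by omega) A₂ hA₂ rfl]
      omega

/-- Corollary 2 of the paper: let `T` be a finite tree with at least two vertices,
equipped with a linear order on its edge set, and for `x ≠ y` let `ℓ x y` be the greatest
edge on the unique path in `T` from `x` to `y`.  Then for every nonempty set `A` of
vertices, the set `{ℓ x y : x, y ∈ A, x ≠ y}` has exactly `|A| − 1` elements. -/
theorem card_max_path_edges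
    {V : Type*} [Fintype V] (G : SimpleGraph V) (hG : G.IsTree)
    (hcard : 2 ≤ Fintype.card V)
    (lo : LinearOrder {e // e ∈ G.edgeSet})
    (ℓ : V → V → {e // e ∈ G.edgeSet})
    (hℓ : ∀ x y : V, x ≠ y → ∀ p : G.Walk x y, p.IsPath →
      (↑(ℓ x y) ∈ p.edges ∧
        ∀ e : {e // e ∈ G.edgeSet}, ↑e ∈ p.edges → lo.le e (ℓ x y))) :
    ∀ A : Finset V, A.Nonempty →
      (((A ×ˢ A).filter fun q => q.1 ≠ q.2).image fun q => ℓ q.1 q.2).card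
        = A.card - 1 :=
  card_max_path_edges_general G hG lo ℓ hℓ
end

section
/- Let (E, ‖·‖) be a real normed vector space and let x ∈ E with ‖x‖ ≤ 1 and x ≠ 0, and let a, b ∈ E with ‖a‖ = ‖b‖ = 1. If the segments [a, 0] and [b, x] intersect, then ‖a − x‖ ≤ ‖b − x‖ + (‖a‖ − ‖b‖), and in particular ‖a − x‖ ≤ ‖b − x‖. Moreover, the same conclusion ‖a − x‖ ≤ ‖b − x‖ holds whenever ‖a‖ ≤ ‖b‖ = 1 and the segments [a, 0] and [b, x] intersect. -/
lemma seg_key {E : Type*} [NormedAddCommGroup E] [NormedSpace ℝ E]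
    (x a b : E) (h : (segment ℝ a 0 ∩ segment ℝ b x).Nonempty) :
    ‖a - x‖ + ‖b‖ ≤ ‖b - x‖ + ‖a‖ := by
  obtain ⟨p, hp1, hp2⟩ := h
  have h1 : dist a p + dist p 0 = dist a 0 := dist_add_dist_of_mem_segment hp1
  have h2 : dist b p + dist p x = dist b x := dist_add_dist_of_mem_segment hp2
  have t1 : dist a x ≤ dist a p + dist p x := dist_triangle a p x
  have t2 : dist b 0 ≤ dist b p + dist p 0 := dist_triangle b p 0
  simp only [dist_eq_norm, sub_zero] at *
  linarith

/-- The form of Lemma 3 of the paper used in the second case of the Claim of Lemma 4: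
for a fixed point `x` with `‖x‖ ≤ 1`, `x ≠ 0`, whenever the segments `[a, 0]` and
`[b, x]` intersect, `‖a − x‖ ≤ ‖b − x‖ + (‖a‖ − ‖b‖)` holds for unit vectors `a`, `b`
(hence `‖a − x‖ ≤ ‖b − x‖`), and moreover `‖a − x‖ ≤ ‖b − x‖` holds whenever
`‖a‖ ≤ ‖b‖ = 1`. -/
theorem segment_intersection_norm_ineqs
    {E : Type*} [NormedAddCommGroup E] [NormedSpace ℝ E]
    (x : E) (hx : ‖x‖ ≤ 1) (hx0 : x ≠ 0) :
    (∀ a b : E, ‖a‖ = 1 → ‖b‖ = 1 →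
      (segment ℝ a 0 ∩ segment ℝ b x).Nonempty →
      ‖a - x‖ ≤ ‖b - x‖ + (‖a‖ - ‖b‖) ∧ ‖a - x‖ ≤ ‖b - x‖) ∧
    (∀ a b : E, ‖a‖ ≤ ‖b‖ → ‖b‖ = 1 →
      (segment ℝ a 0 ∩ segment ℝ b x).Nonempty →
      ‖a - x‖ ≤ ‖b - x‖) := by
  constructor
  · intro a b ha hb h
    have := seg_key x a b h
    constructor <;> [linarith; linarith [ha, hb]]
  · intro a b hab hb h
    have := seg_key x a b h
    linarith
end
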